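/- arXiv:2106.02356 — 4 statements merged into one kernel-verified Lean document; each statement's English description precedes it below -/
import Mathlib

section
/- If Λ is uniform on [-1/2, 1/2], its R-transform (defined by R(z) = G^{-1}(z) - 1/z, where G(z) = log((2z+1)/(2z-1))) equals R(z) = (1/2)·coth(z/2) - 1/z, and hence its free cumulants satisfy κ_k = 0 for odd k and κ_k = B_k/k! for even k, where B_k is the k-th Bernoulli number. -/
/-!
Inverting `G` on `(1/2, ∞)`: from `log ((2w+1)/(2w-1)) = z` one gets `w = 1/2 + 1/(eᶻ - 1)`,
which is `½ coth (z/2)`. Expanding `z/(eᶻ - 1) = Σ Bₙ zⁿ/n!` and dividing by `z`, the term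
`B₀ = 1` produces `1/z` and `B₁ = -1/2` cancels the constant `1/2`, so
`R(z) = Σ_{k ≥ 2} B_k/k! · z^{k-1}`; the odd Bernoulli numbers beyond `B₁` vanish. The series
converges absolutely for `|z| < 1/2`, since the recurrence coming from `B(X)·(eˣ - 1) = X` gives
`|Bₙ/n!| ≤ 2ⁿ`, and the coefficients `κ` are determined by the values of the series on `(0, δ)`
by the identity theorem for analytic functions.
-/

open Filter Topology Set Finset PowerSeries
open scoped Nat

theorem PowerSeries.hasSum_coeff_mul_mul_pow {R : Type*} [NormedCommRing R] [CompleteSpace R]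
    {f g : PowerSeries R} {z : R}
    (hf : Summable fun n => ‖coeff n f * z ^ n‖) (hg : Summable fun n => ‖coeff n g * z ^ n‖) :
    HasSum (fun n => coeff n (f * g) * z ^ n)
      ((∑' n, coeff n f * z ^ n) * ∑' n, coeff n g * z ^ n) := by
  have hterm : ∀ n, coeff n (f * g) * z ^ n =
      ∑ kl ∈ antidiagonal n, coeff kl.1 f * z ^ kl.1 * (coeff kl.2 g * z ^ kl.2) := by
    intro n
    rw [coeff_mul, Finset.sum_mul]
    refine Finset.sum_congr rfl fun kl hkl => ?_
    rw [← mem_antidiagonal.1 hkl, pow_add]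
    ring
  simp_rw [hterm, tsum_mul_tsum_eq_tsum_sum_antidiagonal_of_summable_norm hf hg]
  exact (summable_norm_sum_mul_antidiagonal_of_summable_norm hf hg).of_norm.hasSum

theorem bernoulliPowerSeries_mul_exp (A : Type*) [CommRing A] [Algebra ℚ A] :
    bernoulliPowerSeries A * exp A = bernoulliPowerSeries A + X := by
  rw [← sub_eq_iff_eq_add', ← mul_sub_one, bernoulliPowerSeries_mul_exp_sub_one]

theorem coeff_bernoulliPowerSeries_real (n : ℕ) :
    coeff n (bernoulliPowerSeries ℝ) = bernoulli n / n ! := by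
  simp [bernoulliPowerSeries]

theorem coeff_bernoulliPowerSeries_eq_neg_sum {n : ℕ} (hn : n ≠ 0) :
    coeff n (bernoulliPowerSeries ℝ) =
      -∑ k ∈ range n, coeff k (bernoulliPowerSeries ℝ) / (n + 1 - k)! := by
  have h := congrArg (coeff (n + 1)) (bernoulliPowerSeries_mul_exp ℝ)
  rw [coeff_mul, Finset.Nat.sum_antidiagonal_eq_sum_range_succ
    (fun i j => coeff i (bernoulliPowerSeries ℝ) * coeff j (exp ℝ)), sum_range_succ,
    sum_range_succ, map_add, coeff_X, if_neg (by omega)] at h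
  simp only [coeff_exp, Nat.sub_self, add_tsub_cancel_left, Nat.factorial_zero,
    Nat.factorial_one, Nat.cast_one, div_one, map_one, mul_one, add_zero, map_div₀, map_natCast,
    mul_one_div] at h
  linear_combination h

theorem abs_coeff_bernoulliPowerSeries_le (n : ℕ) :
    |coeff n (bernoulliPowerSeries ℝ)| ≤ 2 ^ n := by
  induction n using Nat.strong_induction_on with
  | _ n ih =>
  rcases eq_or_ne n 0 with rfl | hn
  · simp [coeff_bernoulliPowerSeries_real]
  have hterm : ∀ k ∈ range n, |coeff k (bernoulliPowerSeries ℝ) / (n + 1 - k)!| ≤ 2 ^ k / 2 := by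
    intro k hk
    have hk : k < n := mem_range.1 hk
    have hfact : (2 : ℝ) ≤ (n + 1 - k)! := by
      exact_mod_cast Nat.factorial_le (by omega : 2 ≤ n + 1 - k)
    rw [abs_div, Nat.abs_cast]
    exact div_le_div₀ (by positivity) (ih k hk) (by norm_num) hfact
  calc |coeff n (bernoulliPowerSeries ℝ)|
      ≤ ∑ k ∈ range n, |coeff k (bernoulliPowerSeries ℝ) / (n + 1 - k)!| := by
        rw [coeff_bernoulliPowerSeries_eq_neg_sum hn, abs_neg]
        exact abs_sum_le_sum_abs _ _
    _ ≤ ∑ k ∈ range n, (2 : ℝ) ^ k / 2 := sum_le_sum hterm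
    _ ≤ 2 ^ n := by
        rw [← sum_div, geom_sum_eq (by norm_num)]
        linarith [one_le_pow₀ (M₀ := ℝ) (n := n) (by norm_num : (1 : ℝ) ≤ 2)]

theorem hasSum_coeff_exp_mul_pow (z : ℝ) :
    HasSum (fun n => coeff n (exp ℝ) * z ^ n) (Real.exp z) := by
  simpa [coeff_exp, Real.exp_eq_exp_ℝ, div_eq_inv_mul] using NormedSpace.expSeries_div_hasSum_exp z

theorem summable_norm_coeff_exp_mul_pow (z : ℝ) :
    Summable fun n => ‖coeff n (exp ℝ) * z ^ n‖ := by
  simpa [coeff_exp, div_eq_inv_mul] using Real.summable_pow_div_factorial |z|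

theorem summable_norm_coeff_bernoulliPowerSeries_mul_pow {z : ℝ} (hz : |z| < 1 / 2) :
    Summable fun n => ‖coeff n (bernoulliPowerSeries ℝ) * z ^ n‖ := by
  refine Summable.of_nonneg_of_le (fun n => norm_nonneg _) (fun n => ?_)
    (summable_geometric_of_lt_one (by positivity) (by linarith : 2 * |z| < 1))
  rw [norm_mul, norm_pow, Real.norm_eq_abs, Real.norm_eq_abs, mul_pow]
  gcongr
  exact abs_coeff_bernoulliPowerSeries_le n

theorem hasSum_coeff_bernoulliPowerSeries_mul_pow {z : ℝ} (hz0 : z ≠ 0) (hz : |z| < 1 / 2) :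
    HasSum (fun n => coeff n (bernoulliPowerSeries ℝ) * z ^ n) (z / (Real.exp z - 1)) := by
  have hB := (summable_norm_coeff_bernoulliPowerSeries_mul_pow hz).of_norm.hasSum
  set S := ∑' n, coeff n (bernoulliPowerSeries ℝ) * z ^ n
  have hprod := hasSum_coeff_mul_mul_pow (summable_norm_coeff_bernoulliPowerSeries_mul_pow hz)
    (summable_norm_coeff_exp_mul_pow z)
  rw [(hasSum_coeff_exp_mul_pow z).tsum_eq, bernoulliPowerSeries_mul_exp] at hprod
  have hX : HasSum (fun n => coeff n (X : PowerSeries ℝ) * z ^ n) z := by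
    simpa using hasSum_single (f := fun n => coeff n (X : PowerSeries ℝ) * z ^ n) 1
      fun n hn => by simp [coeff_X, hn]
  have hS : S * Real.exp z = S + z := hprod.unique (by simpa [add_mul] using hB.add hX)
  have hexp : Real.exp z - 1 ≠ 0 := sub_ne_zero.2 (mt (Real.exp_eq_one_iff z).1 hz0)
  rwa [div_eq_of_eq_mul hexp (show z = S * (Real.exp z - 1) by linear_combination -hS)]

theorem half_mul_cosh_div_sinh_half {z : ℝ} (hz : z ≠ 0) :
    1 / 2 * (Real.cosh (z / 2) / Real.sinh (z / 2)) = 1 / 2 + 1 / (Real.exp z - 1) := by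
  have hsinh : Real.sinh (z / 2) ≠ 0 := by simpa using hz
  have hexp : Real.exp z - 1 ≠ 0 := sub_ne_zero.2 (mt (Real.exp_eq_one_iff z).1 hz)
  have hsq : Real.exp (z / 2) * Real.exp (z / 2) = Real.exp z := by rw [← Real.exp_add]; ring_nf
  have hinv : Real.exp (-(z / 2)) * Real.exp (z / 2) = 1 := by rw [← Real.exp_add]; simp
  have hcoth : Real.cosh (z / 2) / Real.sinh (z / 2) = (Real.exp z + 1) / (Real.exp z - 1) := by
    rw [div_eq_div_iff hsinh hexp, Real.cosh_eq, Real.sinh_eq]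
    linear_combination (-Real.exp (-(z / 2))) * hsq + Real.exp (z / 2) * hinv
  rw [hcoth]
  field_simp
  ring

theorem eq_half_mul_cosh_div_sinh_half_of_log_eq {w z : ℝ} (hw : 1 / 2 < w)
    (h : Real.log ((2 * w + 1) / (2 * w - 1)) = z) :
    w = 1 / 2 * (Real.cosh (z / 2) / Real.sinh (z / 2)) := by
  have hden : 0 < 2 * w - 1 := by linarith
  have hexp : Real.exp z = (2 * w + 1) / (2 * w - 1) := by
    rw [← h, Real.exp_log (by positivity)]
  have hz : z ≠ 0 := by
    rintro rfl
    rw [Real.exp_zero, eq_div_iff hden.ne'] at hexp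
    linarith
  have hexp_sub_one : Real.exp z - 1 = 2 / (2 * w - 1) := by
    rw [hexp]
    field_simp
    ring
  rw [half_mul_cosh_div_sinh_half hz, hexp_sub_one]
  field_simp
  ring

theorem hasSum_half_mul_cosh_div_sinh_half_sub_inv {z : ℝ} (hz0 : z ≠ 0) (hz : |z| < 1 / 2) :
    HasSum (fun i => (if i = 0 then 0 else (bernoulli (i + 1) : ℝ) / (i + 1)!) * z ^ i)
      (1 / 2 * (Real.cosh (z / 2) / Real.sinh (z / 2)) - 1 / z) := by
  have hB := hasSum_coeff_bernoulliPowerSeries_mul_pow hz0 hz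
  rw [← hasSum_nat_add_iff' 1] at hB
  have hterm : (fun i => (if i = 0 then 0 else (bernoulli (i + 1) : ℝ) / (i + 1)!) * z ^ i) =
      fun i => coeff (i + 1) (bernoulliPowerSeries ℝ) * z ^ (i + 1) / z +
        if i = 0 then 1 / 2 else 0 := by
    ext i
    rcases eq_or_ne i 0 with rfl | hi
    · norm_num [coeff_bernoulliPowerSeries_real, bernoulli_one, neg_div, mul_div_assoc, hz0]
    · rw [if_neg hi, if_neg hi, add_zero, coeff_bernoulliPowerSeries_real, pow_succ]
      field_simp
  have hsum : 1 / 2 * (Real.cosh (z / 2) / Real.sinh (z / 2)) - 1 / z =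
      (z / (Real.exp z - 1) - ∑ i ∈ range 1, coeff i (bernoulliPowerSeries ℝ) * z ^ i) / z +
        1 / 2 := by
    rw [half_mul_cosh_div_sinh_half hz0, sum_range_one, coeff_bernoulliPowerSeries_real]
    simp only [bernoulli_zero, Rat.cast_one, Nat.factorial_zero, Nat.cast_one, div_one, pow_zero,
      mul_one]
    field_simp
    ring
  rw [hterm, hsum]
  exact (hB.div_const z).add (hasSum_ite_eq 0 (1 / 2 : ℝ))

open FormalMultilinearSeries in
theorem eq_zero_of_frequently_hasSum_mul_pow_eq_zero {𝕜 : Type*} [NontriviallyNormedField 𝕜]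
    [CompleteSpace 𝕜] {a : ℕ → 𝕜}
    (h : ∃ᶠ z in 𝓝[≠] (0 : 𝕜), HasSum (fun n => a n * z ^ n) 0) : a = 0 := by
  set p := ofScalars 𝕜 a
  have hsum : ∀ z, HasSum (fun n => a n * z ^ n) 0 → p.sum z = 0 := fun z hz => by
    simpa [FormalMultilinearSeries.sum, p, ofScalars_apply_eq, mul_comm] using hz.tsum_eq
  obtain ⟨z, hz, hz0⟩ := (h.and_eventually self_mem_nhdsWithin).exists
  have hradius : 0 < p.radius := by
    have hlim : Tendsto (fun n => ‖p n‖ * (‖z‖₊ : ℝ) ^ n) atTop (𝓝 0) := by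
      simpa [p, ofScalars_norm, norm_mul, norm_pow] using hz.summable.tendsto_atTop_zero.norm
    exact lt_of_lt_of_le (by simpa using hz0) (p.le_radius_of_tendsto hlim)
  have hp : HasFPowerSeriesAt p.sum p 0 := (p.hasFPowerSeriesOnBall hradius).hasFPowerSeriesAt
  have hzero : ∀ᶠ z in 𝓝 0, p.sum z = 0 :=
    hp.analyticAt.frequently_zero_iff_eventually_zero.1 (h.mono hsum)
  exact (ofScalars_series_eq_zero 𝕜).1 (hp.locally_zero_iff.1 hzero)

theorem eq_of_forall_mem_Ioo_hasSum_mul_pow {a b : ℕ → ℝ} {f : ℝ → ℝ} {δ : ℝ} (hδ : 0 < δ)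
    (ha : ∀ z ∈ Ioo 0 δ, HasSum (fun n => a n * z ^ n) (f z))
    (hb : ∀ z ∈ Ioo 0 δ, HasSum (fun n => b n * z ^ n) (f z)) : a = b := by
  refine sub_eq_zero.1 (eq_zero_of_frequently_hasSum_mul_pow_eq_zero ?_)
  have hIoo : ∀ᶠ z in 𝓝[>] (0 : ℝ), z ∈ Ioo 0 δ := Ioo_mem_nhdsGT hδ
  refine (hIoo.frequently.filter_mono (nhdsGT_le_nhdsNE 0)).mono fun z hz => ?_
  simpa [sub_mul] using (ha z hz).sub (hb z hz)

/-- For `Λ` uniform on `[-1/2,1/2]`, with Cauchy transform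
`G(z) = log((2z+1)/(2z-1))`, the R-transform `R(z) = G⁻¹(z) - 1/z` equals
`(1/2)·coth(z/2) - 1/z`; hence the free cumulants (the coefficients of
`R(z) = Σ κ_{i+1} z^i`) satisfy `κ_k = 0` for odd `k` and `κ_k = B_k/k!`
for even `k`. -/
theorem stmt2
    (G Ginv R : ℝ → ℝ) (δ : ℝ) (hδ : 0 < δ)
    (hG : ∀ z : ℝ, 1 / 2 < z → G z = Real.log ((2 * z + 1) / (2 * z - 1)))
    (hGinv : ∀ z ∈ Set.Ioo (0 : ℝ) δ, 1 / 2 < Ginv z ∧ G (Ginv z) = z)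
    (hR : ∀ z : ℝ, z ≠ 0 → R z = Ginv z - 1 / z)
    (κ : ℕ → ℝ)
    (hκ : ∀ z ∈ Set.Ioo (0 : ℝ) δ, HasSum (fun i : ℕ => κ (i + 1) * z ^ i) (R z)) :
    (∀ z ∈ Set.Ioo (0 : ℝ) δ,
        R z = (1 / 2) * (Real.cosh (z / 2) / Real.sinh (z / 2)) - 1 / z) ∧
    (∀ k : ℕ, 1 ≤ k → Odd k → κ k = 0) ∧
    (∀ k : ℕ, 1 ≤ k → Even k → κ k = (bernoulli k : ℝ) / (Nat.factorial k : ℝ)) := by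
  have hR_eq : ∀ z ∈ Ioo 0 δ, R z = 1 / 2 * (Real.cosh (z / 2) / Real.sinh (z / 2)) - 1 / z := by
    intro z hz
    obtain ⟨hw, hGw⟩ := hGinv z hz
    rw [hR z hz.1.ne', eq_half_mul_cosh_div_sinh_half_of_log_eq hw ((hG _ hw).symm.trans hGw)]
  have hκ_eq : (fun i => κ (i + 1)) =
      fun i => if i = 0 then 0 else (bernoulli (i + 1) : ℝ) / (i + 1)! := by
    refine eq_of_forall_mem_Ioo_hasSum_mul_pow (lt_min hδ one_half_pos)
      (fun z hz => hκ z ⟨hz.1, hz.2.trans_le (min_le_left _ _)⟩) fun z hz => ?_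
    rw [hR_eq z ⟨hz.1, hz.2.trans_le (min_le_left _ _)⟩]
    exact hasSum_half_mul_cosh_div_sinh_half_sub_inv hz.1.ne'
      ((abs_of_pos hz.1).trans_lt (hz.2.trans_le (min_le_right _ _)))
  refine ⟨hR_eq, fun k hk hodd => ?_, fun k hk heven => ?_⟩
  · obtain ⟨i, rfl⟩ := Nat.exists_eq_add_of_le' hk
    rw [congrFun hκ_eq i]
    split_ifs with hi
    · rfl
    · rw [bernoulli_eq_zero_of_odd hodd (by omega), Rat.cast_zero, zero_div]
  · obtain ⟨i, rfl⟩ := Nat.exists_eq_add_of_le' hk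
    have hi : i ≠ 0 := by rintro rfl; exact Nat.not_even_one heven
    rw [congrFun hκ_eq i, if_neg hi]
end

section
/- Under the same setting, if additionally κ_k ≥ 0 for all k ≥ 2 and ξ ∈ (0,1) is such that R'(1/(ξα))(1/(ξα))² < 1, then for the weighted norm ‖x‖_ξ = sup_{s,t≤0} ξ^{max(|s|,|t|)}|x_{s,t}|, the map h satisfies the Lipschitz bound ‖h(x) - h(y)‖_ξ ≤ R'(1/(ξα))(1/(ξα))² · ‖x - y‖_ξ for all x, y with finite ‖·‖_ξ norm; i.e., h is a contraction on (X_{I*}, ‖·‖_ξ). -/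
/-! Term by term, `h(x) - h(y)` at `(s,t)` is `κ_{i+j+2} α^{-(i+j+2)} (x - y)` at `(s-i, t-j)`,
a point whose weight exponent exceeds that of `(s,t)` by at most `i + j`. Hence the weighted
difference of each term is bounded by `κ_{i+j+2} (ξα)^{-(i+j+2)} ‖x - y‖_ξ`, and summing these
bounds gives `R'(1/(ξα)) (1/(ξα))² ‖x - y‖_ξ`. -/

/-- No summability of `f` or `g` is needed: either both converge, or neither does and both
`tsum`s are the junk value `0`. -/
theorem norm_tsum_sub_tsum_le_tsum_norm_sub {ι E : Type*} [NormedAddCommGroup E] [CompleteSpace E]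
    {f g : ι → E} (h : Summable fun i => ‖f i - g i‖) :
    ‖∑' i, f i - ∑' i, g i‖ ≤ ∑' i, ‖f i - g i‖ := by
  have hfg : Summable fun i => f i - g i := h.of_norm
  by_cases hf : Summable f
  · have hg : Summable g := by simpa using hf.sub hfg
    rw [← hf.tsum_sub hg]
    exact norm_tsum_le_tsum_norm h
  · have hg : ¬ Summable g := fun hg => hf (by simpa using hg.add hfg)
    rw [tsum_eq_zero_of_not_summable hf, tsum_eq_zero_of_not_summable hg, sub_zero, norm_zero]
    exact tsum_nonneg fun i => norm_nonneg _

theorem mul_abs_tsum_sub_tsum_le {ι : Type*} {f g B : ι → ℝ} {w : ℝ} (hw : 0 < w)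
    (hB : Summable B) (h : ∀ i, w * |f i - g i| ≤ B i) :
    w * |∑' i, f i - ∑' i, g i| ≤ ∑' i, B i := by
  have hbound : ∀ i, |f i - g i| ≤ w⁻¹ * B i := fun i => by
    rw [← div_eq_inv_mul, le_div_iff₀' hw]
    exact h i
  have hsum : Summable fun i => |f i - g i| :=
    (hB.mul_left w⁻¹).of_nonneg_of_le (fun i => abs_nonneg _) hbound
  calc w * |∑' i, f i - ∑' i, g i| ≤ w * ∑' i, |f i - g i| := by
        gcongr
        simpa only [Real.norm_eq_abs] using norm_tsum_sub_tsum_le_tsum_norm_sub (E := ℝ) hsum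
    _ = ∑' i, w * |f i - g i| := tsum_mul_left.symm
    _ ≤ ∑' i, B i := (hsum.mul_left w).tsum_le_tsum h hB

theorem pow_mul_abs_kernel_term_sub_le {κ α ξ c a b M : ℝ} {m k n : ℕ} (hκ : 0 ≤ κ)
    (hα : 0 < α) (hξ0 : 0 < ξ) (hξ1 : ξ ≤ 1) (hk : k ≤ m + n) (hab : ξ ^ k * |a - b| ≤ M) :
    ξ ^ m * |κ * (1 / α) ^ (n + 2) * (c + a) - κ * (1 / α) ^ (n + 2) * (c + b)| ≤
      κ * (1 / (ξ * α)) ^ n * ((1 / (ξ * α)) ^ 2 * M) := by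
  have hshift : ξ ^ m * |a - b| * ξ ^ (n + 2) ≤ M :=
    calc ξ ^ m * |a - b| * ξ ^ (n + 2) = ξ ^ (m + n + 2) * |a - b| := by ring
      _ ≤ ξ ^ k * |a - b| :=
        mul_le_mul_of_nonneg_right (pow_le_pow_of_le_one hξ0.le hξ1 (by omega)) (abs_nonneg _)
      _ ≤ M := hab
  have hdiff : κ * (1 / α) ^ (n + 2) * (c + a) - κ * (1 / α) ^ (n + 2) * (c + b) =
      κ * (1 / α) ^ (n + 2) * (a - b) := by ring
  have hrhs : κ * (1 / (ξ * α)) ^ n * ((1 / (ξ * α)) ^ 2 * M) =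
      κ * (1 / α) ^ (n + 2) * (M / ξ ^ (n + 2)) := by
    rw [mul_comm ξ, ← one_div_mul_one_div]
    ring
  rw [hdiff, hrhs, abs_mul, abs_of_nonneg (by positivity)]
  calc ξ ^ m * (κ * (1 / α) ^ (n + 2) * |a - b|)
      = κ * (1 / α) ^ (n + 2) * (ξ ^ m * |a - b|) := by ring
    _ ≤ κ * (1 / α) ^ (n + 2) * (M / ξ ^ (n + 2)) := by
      gcongr
      rwa [le_div_iff₀ (by positivity)]

theorem stmt4_general
    (κ : ℕ → ℝ) (α ξ : ℝ)
    (hκ : ∀ k : ℕ, 2 ≤ k → 0 ≤ κ k)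
    (hα : 0 < α) (hξ0 : 0 < ξ) (hξ1 : ξ < 1)
    (hconv : Summable (fun p : ℕ × ℕ => κ (p.1 + p.2 + 2) * (1 / (ξ * α)) ^ (p.1 + p.2)))
    (c : ℝ)
    (x y : ℤ → ℤ → ℝ) (M : ℝ)
    (hxy : ∀ s t : ℤ, s ≤ 0 → t ≤ 0 →
      ξ ^ (max s.natAbs t.natAbs) * |x s t - y s t| ≤ M) :
    ∀ s t : ℤ, s ≤ 0 → t ≤ 0 →
      ξ ^ (max s.natAbs t.natAbs) *
        |(∑' p : ℕ × ℕ, κ (p.1 + p.2 + 2) * (1 / α) ^ (p.1 + p.2 + 2) *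
              (c + x (s - (p.1 : ℤ)) (t - (p.2 : ℤ)))) -
         (∑' p : ℕ × ℕ, κ (p.1 + p.2 + 2) * (1 / α) ^ (p.1 + p.2 + 2) *
              (c + y (s - (p.1 : ℤ)) (t - (p.2 : ℤ))))| ≤
      ((∑' p : ℕ × ℕ, κ (p.1 + p.2 + 2) * (1 / (ξ * α)) ^ (p.1 + p.2)) *
          (1 / (ξ * α)) ^ 2) * M := by
  intro s t hs ht
  refine (mul_abs_tsum_sub_tsum_le (by positivity) (hconv.mul_right ((1 / (ξ * α)) ^ 2 * M))
    fun p => ?_).trans_eq ?_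
  · exact pow_mul_abs_kernel_term_sub_le (hκ _ (by omega)) hα hξ0 hξ1.le (by omega)
      (hxy _ _ (by omega) (by omega))
  · rw [tsum_mul_right, mul_assoc]

/-- The limit map `h` is a contraction in the weighted sup-norm
`‖x‖_ξ = sup_{s,t≤0} ξ^{max(|s|,|t|)}|x_{s,t}|`: if `κ_k ≥ 0` for `k ≥ 2`, `ξ ∈ (0,1)`,
`L := R'(1/(ξα))(1/(ξα))² < 1`, and `ξ^{max(|s|,|t|)}|x_{s,t} - y_{s,t}| ≤ M` for all
nonpositive `s,t`, then `ξ^{max(|s|,|t|)}|h(x)_{s,t} - h(y)_{s,t}| ≤ L·M`. -/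
theorem stmt4
    (κ : ℕ → ℝ) (α ξ : ℝ)
    (hκ : ∀ k : ℕ, 2 ≤ k → 0 ≤ κ k)
    (hα : 0 < α) (hξ0 : 0 < ξ) (hξ1 : ξ < 1)
    (hconv : Summable (fun p : ℕ × ℕ => κ (p.1 + p.2 + 2) * (1 / (ξ * α)) ^ (p.1 + p.2)))
    (hcontr :
      (∑' p : ℕ × ℕ, κ (p.1 + p.2 + 2) * (1 / (ξ * α)) ^ (p.1 + p.2)) * (1 / (ξ * α)) ^ 2 < 1)
    (c : ℝ) (hc : 0 ≤ c)
    (x y : ℤ → ℤ → ℝ) (M : ℝ)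
    (hxy : ∀ s t : ℤ, s ≤ 0 → t ≤ 0 →
      ξ ^ (max s.natAbs t.natAbs) * |x s t - y s t| ≤ M) :
    ∀ s t : ℤ, s ≤ 0 → t ≤ 0 →
      ξ ^ (max s.natAbs t.natAbs) *
        |(∑' p : ℕ × ℕ, κ (p.1 + p.2 + 2) * (1 / α) ^ (p.1 + p.2 + 2) *
              (c + x (s - (p.1 : ℤ)) (t - (p.2 : ℤ)))) -
         (∑' p : ℕ × ℕ, κ (p.1 + p.2 + 2) * (1 / α) ^ (p.1 + p.2 + 2) *
              (c + y (s - (p.1 : ℤ)) (t - (p.2 : ℤ))))| ≤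
      ((∑' p : ℕ × ℕ, κ (p.1 + p.2 + 2) * (1 / (ξ * α)) ^ (p.1 + p.2)) *
          (1 / (ξ * α)) ^ 2) * M :=
  stmt4_general κ α ξ hκ hα hξ0 hξ1 hconv c x y M hxy
end

section
/- Under the hypotheses of the previous statement (κ_{2i} ≥ 0, R convergent at x > 0, T(R(x)) - xT'(R(x))R'(x) > 0 with T(z) = (1+z)(1+γz)), one has 1 - xR'(x) + R(x) > 0 and 1 - γxR'(x) + γR(x) > 0. -/
/-!
Write `y = x R'(x)`, `A = 1 - y + R(x)` and `B = 1 - γ y + γ R(x)`. Expanding,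
`T(R) - y T'(R) = A B - γ y²`, so the hypothesis gives `A B > 0`. If `B ≤ 0`, i.e.
`γ y ≥ 1 + γ R`, then multiplying by `T'(R) = 1 + γ + 2γR ≥ 0` (here `R ≥ 0` is used) gives
`γ (T(R) - y T'(R)) ≤ -(1 + γ R)² < 0`, a contradiction. Hence `B > 0`, and then `A > 0`.
-/

lemma hasSum_even_coeff_nonneg (κ : ℕ → ℝ) (hκ : ∀ i : ℕ, 1 ≤ i → 0 ≤ κ (2 * i))
    {x Rx : ℝ} (hx : 0 ≤ x) (hR : HasSum (fun i : ℕ => κ (2 * (i + 1)) * x ^ (i + 1)) Rx) :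
    0 ≤ Rx :=
  hR.nonneg fun i => mul_nonneg (hκ (i + 1) (by omega)) (pow_nonneg hx _)

lemma factors_mul_eq (γ r y : ℝ) :
    (1 - y + r) * (1 - γ * y + γ * r) =
      (1 + r) * (1 + γ * r) - y * (1 + γ + 2 * γ * r) + γ * y ^ 2 := by
  ring

lemma factors_pos_of_pos {γ r y : ℝ} (hγ : 0 < γ) (hr : 0 ≤ r)
    (h : 0 < (1 + r) * (1 + γ * r) - y * (1 + γ + 2 * γ * r)) :
    0 < 1 - y + r ∧ 0 < 1 - γ * y + γ * r := by
  have hB : 0 < 1 - γ * y + γ * r := by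
    by_contra! hB
    have hT' : 0 ≤ 1 + γ + 2 * γ * r := by positivity
    have : γ * ((1 + r) * (1 + γ * r) - y * (1 + γ + 2 * γ * r)) ≤ -(1 + γ * r) ^ 2 := by
      nlinarith [mul_le_mul_of_nonneg_right (by linarith : 1 + γ * r ≤ γ * y) hT']
    nlinarith [mul_pos hγ h, sq_nonneg (1 + γ * r)]
  have hAB : 0 < (1 - y + r) * (1 - γ * y + γ * r) := by
    rw [factors_mul_eq]
    positivity
  exact ⟨pos_of_mul_pos_left hAB hB.le, hB⟩

theorem stmt11_general
    (κ : ℕ → ℝ) (hκ : ∀ i : ℕ, 1 ≤ i → 0 ≤ κ (2 * i))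
    (γ : ℝ) (hγ0 : 0 < γ)
    (x Rx Rpx : ℝ) (hx : 0 < x)
    (hR : HasSum (fun i : ℕ => κ (2 * (i + 1)) * x ^ (i + 1)) Rx)
    (hpos : 0 < (1 + Rx) * (1 + γ * Rx) - x * (1 + γ + 2 * γ * Rx) * Rpx) :
    0 < 1 - x * Rpx + Rx ∧ 0 < 1 - γ * (x * Rpx) + γ * Rx := by
  have hRx : 0 ≤ Rx := hasSum_even_coeff_nonneg κ hκ hx.le hR
  refine factors_pos_of_pos hγ0 hRx ?_
  convert hpos using 2
  ring

/-- Under the hypotheses of Statement 10 (nonnegative cumulants,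
`R` and `R'` convergent at `x > 0`, `T(R(x)) - xT'(R(x))R'(x) > 0` with
`T(z) = (1+z)(1+γz)`), one has `1 - xR'(x) + R(x) > 0` and
`1 - γxR'(x) + γR(x) > 0`. -/
theorem stmt11
    (κ : ℕ → ℝ) (hκ : ∀ i : ℕ, 1 ≤ i → 0 ≤ κ (2 * i))
    (γ : ℝ) (hγ0 : 0 < γ) (hγ1 : γ ≤ 1)
    (x Rx Rpx : ℝ) (hx : 0 < x)
    (hR : HasSum (fun i : ℕ => κ (2 * (i + 1)) * x ^ (i + 1)) Rx)
    (hRp : HasSum (fun i : ℕ => ((i : ℝ) + 1) * κ (2 * (i + 1)) * x ^ i) Rpx)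
    (hpos : 0 < (1 + Rx) * (1 + γ * Rx) - x * (1 + γ + 2 * γ * Rx) * Rpx) :
    0 < 1 - x * Rpx + Rx ∧ 0 < 1 - γ * (x * Rpx) + γ * Rx :=
  stmt11_general κ hκ γ hγ0 x Rx Rpx hx hR hpos
end

section
/- Let (κ_k)_{k≥2} be nonnegative with R'(z) = Σ_{j,k≥0}κ_{j+k+2}z^{j+k} convergent at 1/(ξα) for some ξ ∈ (0,1), α > 0. For T ≥ 1 let (σ̃_{s,t})_{s,t∈[0,T+1]} be symmetric arrays satisfying σ̃_{s,t} = Σ_{j=0}^{s-1}Σ_{k=0}^{t-1} κ_{j+k+2}(1/α)^{j+k+2}(c + σ̃_{s-j-1,t-k-1}) for s,t ≥ 1, with boundary σ̃_{0,0} = a*, σ̃_{0,t} = σ̃_{t,0} = 0 for t ≥ 1, where c ≥ 0 and a* = α²(1-ρ_α²) satisfy c + a* = α² and R'(1/α) = a*. If sup_{0≤s,t≤T}ξ^{max(s,t)}|σ̃_{T+1-s,T+1-t} - a*| → 0 as T → ∞, then S_T := Σ_{i,j=0}^{T}κ_{i+1}κ_{j+1}α^{-(i+j)}(σ̃_{T-j,T-i}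 + σ̃_{T,T} - σ̃_{T,T-i} - σ̃_{T,T-j}) → 0 as T → ∞. -/
/-!
The summand is `κ_{i+1} κ_{j+1} α^{-(i+j)}` times a mixed second difference of `σ̃ - a*`.
For fixed `(i, j)` the weighted convergence makes every entry involved tend to `a*`, so each
summand tends to `0`. For large `T` the same hypothesis, together with the boundary values
`σ̃_{0,m} ∈ {0, a*}`, bounds the deviation `|σ̃_{T+1-s,T+1-t} - a*|` by `max 1 |a*| · ξ^{-(s+t)}`,
so the summands are dominated by a constant times `g_i g_j` with `g_i = |κ_{i+1}| (ξα)^{-i}`,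
which is summable because `R(1/(ξα))` converges. Tannery's theorem concludes.
-/

open Filter Topology

theorem tendsto_finset_sum_of_dominated_convergence {α β G : Type*} {𝓕 : Filter α} [𝓕.NeBot]
    [NormedAddCommGroup G] [CompleteSpace G] {f : α → β → G} {g : β → G} {bound : β → ℝ}
    {s : α → Finset β} (h_sum : Summable bound) (hs : ∀ k, ∀ᶠ n in 𝓕, k ∈ s n)
    (hab : ∀ k, Tendsto (f · k) 𝓕 (𝓝 (g k)))
    (h_bound : ∀ᶠ n in 𝓕, ∀ k ∈ s n, ‖f n k‖ ≤ bound k) :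
    Tendsto (fun n => ∑ k ∈ s n, f n k) 𝓕 (𝓝 (∑' k, g k)) := by
  have bound_nonneg (k : β) : 0 ≤ bound k :=
    let ⟨_, hk, hn⟩ := ((hs k).and h_bound).exists
    (norm_nonneg _).trans (hn k hk)
  rw [show (fun n => ∑ k ∈ s n, f n k) = fun n => ∑' k, (s n : Set β).indicator (f n) k from
    funext fun n => sum_eq_tsum_indicator (f n) (s n)]
  refine tendsto_tsum_of_dominated_convergence h_sum (fun k => (hab k).congr' ?_) ?_
  · filter_upwards [hs k] with n hn
    rw [Set.indicator_of_mem (Finset.mem_coe.2 hn)]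
  · filter_upwards [h_bound] with n hn k
    by_cases hk : k ∈ s n
    · simpa [hk] using hn k hk
    · simpa [hk] using bound_nonneg k

/-- `sup_{s,t ≤ T} ξ^{max(s,t)} |σ_{T+1-s,T+1-t} - a| → 0` as `T → ∞`. -/
def WeightedSupTendsto (ξ a : ℝ) (σ : ℕ → ℕ → ℝ) : Prop :=
  ∀ ε : ℝ, 0 < ε → ∃ T₀ : ℕ, ∀ T : ℕ, T₀ ≤ T →
    ∀ s t : ℕ, s ≤ T → t ≤ T → ξ ^ (max s t) * |σ (T + 1 - s) (T + 1 - t) - a| < ε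

namespace WeightedSupTendsto

variable {ξ a : ℝ} {σ : ℕ → ℕ → ℝ}

theorem tendsto (h : WeightedSupTendsto ξ a σ) (hξ : 0 < ξ) (s t : ℕ) :
    Tendsto (fun T => σ (T + 1 - s) (T + 1 - t)) atTop (𝓝 a) := by
  rw [Metric.tendsto_atTop]
  intro ε hε
  have hw : 0 < ξ ^ max s t := pow_pos hξ _
  obtain ⟨T₀, hT₀⟩ := h (ξ ^ max s t * ε) (mul_pos hw hε)
  refine ⟨max T₀ (max s t), fun T hT => ?_⟩
  rw [Real.dist_eq]
  exact lt_of_mul_lt_mul_left (hT₀ T (le_of_max_le_left hT) s t (by grind) (by grind)) hw.le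

theorem eventually_abs_sub_le (h : WeightedSupTendsto ξ a σ) (hξ0 : 0 < ξ) (hξ1 : ξ ≤ 1)
    {ε : ℝ} (hε : 0 < ε) :
    ∀ᶠ T in atTop, ∀ s t, s ≤ T → t ≤ T → |σ (T + 1 - s) (T + 1 - t) - a| ≤ ε * ξ⁻¹ ^ (s + t) := by
  obtain ⟨T₀, hT₀⟩ := h ε hε
  filter_upwards [eventually_ge_atTop T₀] with T hT s t hs ht
  have hw : 0 < ξ ^ max s t := pow_pos hξ0 _
  calc |σ (T + 1 - s) (T + 1 - t) - a| ≤ ε * ξ⁻¹ ^ max s t := by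
        rw [inv_pow, ← div_eq_mul_inv, le_div_iff₀' hw]
        exact (hT₀ T hT s t hs ht).le
    _ ≤ ε * ξ⁻¹ ^ (s + t) := by
        gcongr
        · exact one_le_inv₀ hξ0 |>.2 hξ1
        · omega

theorem eventually_abs_sub_le_of_boundary (h : WeightedSupTendsto ξ a σ) (hξ0 : 0 < ξ)
    (hξ1 : ξ ≤ 1) (hsymm : ∀ s t, σ s t = σ t s) {B : ℝ} (hB : ∀ m, |σ 0 m - a| ≤ B) :
    ∀ᶠ T in atTop, ∀ s t, s ≤ T + 1 → t ≤ T + 1 →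
      |σ (T + 1 - s) (T + 1 - t) - a| ≤ max 1 B * ξ⁻¹ ^ (s + t) := by
  filter_upwards [h.eventually_abs_sub_le hξ0 hξ1 one_pos] with T hT s t hs ht
  have hr : 1 ≤ ξ⁻¹ ^ (s + t) := one_le_pow₀ (one_le_inv₀ hξ0 |>.2 hξ1)
  have hB' : B ≤ max 1 B * ξ⁻¹ ^ (s + t) := by nlinarith [le_max_left 1 B, le_max_right 1 B]
  rcases Nat.lt_or_ge T s with hs' | hs'
  · rw [show T + 1 - s = 0 by omega]
    exact (hB _).trans hB'
  rcases Nat.lt_or_ge T t with ht' | ht'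
  · rw [show T + 1 - t = 0 by omega, hsymm]
    exact (hB _).trans hB'
  exact (hT s t hs' ht').trans (by gcongr; exact le_max_left 1 B)

theorem tendsto_second_difference (h : WeightedSupTendsto ξ a σ) (hξ : 0 < ξ) (i j : ℕ) :
    Tendsto (fun T => σ (T - j) (T - i) + σ T T - σ T (T - i) - σ T (T - j)) atTop (𝓝 0) := by
  have hlim (s t : ℕ) : Tendsto (fun T => σ (T - s) (T - t)) atTop (𝓝 a) := by
    simpa only [Nat.add_sub_add_right] using h.tendsto hξ (s + 1) (t + 1)
  simpa using (((hlim j i).add (hlim 0 0)).sub (hlim 0 i)).sub (hlim 0 j)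

end WeightedSupTendsto

theorem abs_second_difference_le {σ : ℕ → ℕ → ℝ} {a r K : ℝ} (hr : 1 ≤ r) (hK : 0 ≤ K)
    {T i j : ℕ} (hi : i ≤ T) (hj : j ≤ T)
    (h : ∀ s t, s ≤ T + 1 → t ≤ T + 1 → |σ (T + 1 - s) (T + 1 - t) - a| ≤ K * r ^ (s + t)) :
    |σ (T - j) (T - i) + σ T T - σ T (T - i) - σ T (T - j)| ≤ 4 * K * r ^ (i + j + 2) := by
  have h' (s t : ℕ) (hs : s ≤ T) (ht : t ≤ T) (hst : s + t ≤ i + j) :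
      |σ (T - s) (T - t) - a| ≤ K * r ^ (i + j + 2) := by
    have := h (s + 1) (t + 1) (by omega) (by omega)
    rw [Nat.add_sub_add_right, Nat.add_sub_add_right] at this
    exact this.trans (mul_le_mul_of_nonneg_left (pow_le_pow_right₀ hr (by omega)) hK)
  have h₁ := h' j i hj hi (by omega)
  have h₂ := h' 0 0 (by omega) (by omega) (by omega)
  have h₃ := h' 0 i (by omega) hi (by omega)
  have h₄ := h' 0 j (by omega) hj (by omega)
  rw [Nat.sub_zero] at h₂ h₃ h₄
  rw [abs_le] at h₁ h₂ h₃ h₄ ⊢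
  constructor <;> linarith [h₁.1, h₁.2, h₂.1, h₂.2, h₃.1, h₃.2, h₄.1, h₄.2]

theorem abs_weighted_term_le {κi κj α ξ D B : ℝ} {i j : ℕ} (hα : 0 < α) (hξ : 0 < ξ)
    (hD : |D| ≤ B * ξ⁻¹ ^ (i + j + 2)) :
    |κi * κj * (1 / α) ^ (i + j) * D| ≤
      B * ξ⁻¹ ^ 2 * (|κi * (1 / (ξ * α)) ^ i| * |κj * (1 / (ξ * α)) ^ j|) := by
  have hαi : 0 ≤ (1 / α) ^ (i + j) := by positivity
  calc |κi * κj * (1 / α) ^ (i + j) * D|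
      = |κi| * |κj| * (1 / α) ^ (i + j) * |D| := by rw [abs_mul, abs_mul, abs_mul, abs_of_nonneg hαi]
    _ ≤ |κi| * |κj| * (1 / α) ^ (i + j) * (B * ξ⁻¹ ^ (i + j + 2)) := by gcongr
    _ = B * ξ⁻¹ ^ 2 * (|κi * (1 / (ξ * α)) ^ i| * |κj * (1 / (ξ * α)) ^ j|) := by
      have hξα (n : ℕ) : |(1 / (ξ * α)) ^ n| = ξ⁻¹ ^ n * (1 / α) ^ n := by
        rw [abs_of_pos (by positivity), one_div, mul_inv, mul_pow, one_div]
      rw [abs_mul, abs_mul, hξα, hξα]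
      ring

theorem stmt13_general
    (κ : ℕ → ℝ)
    (α ξ astar : ℝ) (hα : 0 < α) (hξ0 : 0 < ξ) (hξ1 : ξ < 1)
    (hRconv : Summable (fun i : ℕ => κ (i + 1) * (1 / (ξ * α)) ^ i))
    (σ : ℕ → ℕ → ℝ)
    (hsymm : ∀ s t : ℕ, σ s t = σ t s)
    (hσ00 : σ 0 0 = astar)
    (hσ0t : ∀ t : ℕ, 1 ≤ t → σ 0 t = 0)
    (hsup : ∀ ε : ℝ, 0 < ε → ∃ T₀ : ℕ, ∀ T : ℕ, T₀ ≤ T →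
      ∀ s t : ℕ, s ≤ T → t ≤ T →
        ξ ^ (max s t) * |σ (T + 1 - s) (T + 1 - t) - astar| < ε) :
    Tendsto (fun T : ℕ =>
        ∑ i ∈ Finset.range (T + 1), ∑ j ∈ Finset.range (T + 1),
          κ (i + 1) * κ (j + 1) * (1 / α) ^ (i + j) *
            (σ (T - j) (T - i) + σ T T - σ T (T - i) - σ T (T - j)))
      atTop (nhds 0) := by
  have hconv : WeightedSupTendsto ξ astar σ := hsup
  have hboundary (m : ℕ) : |σ 0 m - astar| ≤ |astar| := by
    rcases m with _ | m
    · simp [hσ00]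
    · simp [hσ0t (m + 1) m.succ_pos]
  have hg := hRconv.abs
  have key := tendsto_finset_sum_of_dominated_convergence (g := fun _ => (0 : ℝ))
    (f := fun T p => κ (p.1 + 1) * κ (p.2 + 1) * (1 / α) ^ (p.1 + p.2) *
      (σ (T - p.2) (T - p.1) + σ T T - σ T (T - p.1) - σ T (T - p.2)))
    (s := fun T => Finset.range (T + 1) ×ˢ Finset.range (T + 1))
    ((hg.mul_of_nonneg hg (fun _ => abs_nonneg _) (fun _ => abs_nonneg _)).mul_left
      (4 * max 1 |astar| * ξ⁻¹ ^ 2))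
    (fun p => (eventually_ge_atTop (max p.1 p.2)).mono fun T hT => by
      simp only [Finset.mem_product, Finset.mem_range]; omega)
    (fun p => by
      simpa using (hconv.tendsto_second_difference hξ0 p.1 p.2).const_mul
        (κ (p.1 + 1) * κ (p.2 + 1) * (1 / α) ^ (p.1 + p.2)))
    (by
      filter_upwards [hconv.eventually_abs_sub_le_of_boundary hξ0 hξ1.le hsymm hboundary]
        with T hT p hp
      simp only [Finset.mem_product, Finset.mem_range, Nat.lt_succ_iff] at hp
      exact abs_weighted_term_le hα hξ0 <| abs_second_difference_le
        (one_le_inv₀ hξ0 |>.2 hξ1.le) (by positivity) hp.1 hp.2 hT)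
  simpa only [Finset.sum_product, tsum_zero] using key

/-- If the state-evolution covariance array `σ̃` (satisfying the
first-phase recursion with boundary `σ̃_{0,0} = a*`, `σ̃_{0,t} = 0`) converges to the
fixed point `a*` in the geometrically weighted sup sense, then the weighted double
sum `S_T = Σ_{i,j=0}^{T} κ_{i+1}κ_{j+1}α^{-(i+j)}(σ̃_{T-j,T-i} + σ̃_{T,T} - σ̃_{T,T-i}
- σ̃_{T,T-j})` tends to `0` as `T → ∞`. -/
theorem stmt13
    (κ : ℕ → ℝ) (hκ : ∀ k : ℕ, 2 ≤ k → 0 ≤ κ k)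
    (α ξ c astar : ℝ) (hα : 0 < α) (hξ0 : 0 < ξ) (hξ1 : ξ < 1)
    (hRconv : Summable (fun i : ℕ => κ (i + 1) * (1 / (ξ * α)) ^ i))
    (hRpconv : Summable (fun p : ℕ × ℕ => κ (p.1 + p.2 + 2) * (1 / (ξ * α)) ^ (p.1 + p.2)))
    (hc : 0 ≤ c) (hca : c + astar = α ^ 2)
    (hRp1α : HasSum (fun p : ℕ × ℕ => κ (p.1 + p.2 + 2) * (1 / α) ^ (p.1 + p.2)) astar)
    (σ : ℕ → ℕ → ℝ)
    (hsymm : ∀ s t : ℕ, σ s t = σ t s)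
    (hrec : ∀ s t : ℕ, 1 ≤ s → 1 ≤ t →
      σ s t = ∑ j ∈ Finset.range s, ∑ k ∈ Finset.range t,
        κ (j + k + 2) * (1 / α) ^ (j + k + 2) * (c + σ (s - j - 1) (t - k - 1)))
    (hσ00 : σ 0 0 = astar)
    (hσ0t : ∀ t : ℕ, 1 ≤ t → σ 0 t = 0)
    (hsup : ∀ ε : ℝ, 0 < ε → ∃ T₀ : ℕ, ∀ T : ℕ, T₀ ≤ T →
      ∀ s t : ℕ, s ≤ T → t ≤ T →
        ξ ^ (max s t) * |σ (T + 1 - s) (T + 1 - t) - astar| < ε) :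
    Tendsto (fun T : ℕ =>
        ∑ i ∈ Finset.range (T + 1), ∑ j ∈ Finset.range (T + 1),
          κ (i + 1) * κ (j + 1) * (1 / α) ^ (i + j) *
            (σ (T - j) (T - i) + σ T T - σ T (T - i) - σ T (T - j)))
      atTop (nhds 0) :=
  stmt13_general κ α ξ astar hα hξ0 hξ1 hRconv σ hsymm hσ00 hσ0t hsup
end
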